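/- arXiv:2402.06145 — 3 statements merged into one kernel-verified Lean document; each statement's English description precedes it below -/
import Mathlib

section
/- For integers j, r with 1 ≤ j and 0 ≤ 2r ≤ j, the rational number (j/(j-r))·binom(j-r, r) is a positive integer. -/
/-- For integers j, r with 1 ≤ j and 0 ≤ 2r ≤ j, the rational number
(j/(j-r)) · binom(j-r, r) is a positive integer. -/
theorem j_div_jr_choose_pos_int (j r : ℕ) (hj : 1 ≤ j) (hrj : 2 * r ≤ j) :
    ∃ N : ℕ, 0 < N ∧ ((j : ℚ) / ((j : ℚ) - (r : ℚ))) * (Nat.choose (j - r) r : ℚ) = (N : ℚ) := by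
  rcases Nat.eq_zero_or_pos r with hr | hr
  · subst hr
    refine ⟨1, one_pos, ?_⟩
    have hj0 : (j : ℚ) ≠ 0 := by exact_mod_cast Nat.one_le_iff_ne_zero.mp hj
    simp [Nat.choose_zero_right, div_self hj0]
  · -- r ≥ 1
    have hrm : r ≤ j - r := by omega
    obtain ⟨m, hm⟩ : ∃ m, j - r = m + 1 := ⟨j - r - 1, by omega⟩
    obtain ⟨k, hk⟩ : ∃ k, r = k + 1 := ⟨r - 1, by omega⟩
    set n := j - r with hn
    refine ⟨Nat.choose n r + Nat.choose m k, Nat.add_pos_left (Nat.choose_pos hrm) _, ?_⟩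
    -- key nat identity: (m+1) * choose m k = choose (m+1) (k+1) * (k+1)
    have key : n * Nat.choose m k = Nat.choose n r * r := by
      rw [hm, hk]
      exact Nat.add_one_mul_choose_eq m k
    have hjn : j = n + r := by omega
    have hnat : j * Nat.choose n r = n * (Nat.choose n r + Nat.choose m k) := by
      rw [hjn]
      nlinarith [key]
    have hnQ : (j : ℚ) - (r : ℚ) = (n : ℚ) := by
      have : (n : ℚ) = ((j - r : ℕ) : ℚ) := by rw [hn]
      rw [this, Nat.cast_sub (by omega)]
    have hn0 : (n : ℚ) ≠ 0 := by
      have : 0 < n := by omega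
      exact_mod_cast this.ne'
    rw [hnQ, div_mul_eq_mul_div, div_eq_iff hn0]
    push_cast
    have := congrArg (fun x : ℕ => (x : ℚ)) hnat
    push_cast at this
    linarith [this]
end

section
/- Let p be a prime and k, n even positive integers with k > n+1. Define g_p(x) = ∏_{i=1}^{n/2} (x + p^{k-i} + p^{k-n-1+i}). Then for every nonzero complex α one has p^{nk/2 - n(n+1)/4} ∑_{i=0}^{n} p^{i(i-n)/2} C(n,i)_p α^{i - n/2} = g_p(a), where a = p^{(2k-n-1)/2}(α + 1/α). -/
open Real

/-- The q-analogue of n. -/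
noncomputable def qNat (q : ℂ) (n : ℕ) : ℂ := (q ^ n - 1) / (q - 1)

/-- The q-factorial. -/
noncomputable def qFactorial (q : ℂ) : ℕ → ℂ
  | 0 => 1
  | n + 1 => qNat q (n + 1) * qFactorial q n

/-- The Gaussian (q-)binomial coefficient. -/
noncomputable def qBinom (q : ℂ) (n m : ℕ) : ℂ :=
  qFactorial q n / (qFactorial q m * qFactorial q (n - m))

section Aux
variable {q : ℂ}

lemma q_ne_one (hq : ∀ j : ℕ, 0 < j → q ^ j ≠ 1) : q ≠ 1 := by
  intro h; exact hq 1 one_pos (by simp [h])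

lemma qNat_ne_zero (hq : ∀ j : ℕ, 0 < j → q ^ j ≠ 1) {j : ℕ} (hj : 0 < j) : qNat q j ≠ 0 :=
  div_ne_zero (sub_ne_zero.mpr (hq j hj)) (sub_ne_zero.mpr (q_ne_one hq))

lemma qFactorial_ne_zero (hq : ∀ j : ℕ, 0 < j → q ^ j ≠ 1) : ∀ n, qFactorial q n ≠ 0
  | 0 => one_ne_zero
  | n + 1 => mul_ne_zero (qNat_ne_zero hq n.succ_pos) (qFactorial_ne_zero hq n)

lemma qBinom_zero (hq : ∀ j : ℕ, 0 < j → q ^ j ≠ 1) (n : ℕ) : qBinom q n 0 = 1 := by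
  simp [qBinom, qFactorial, div_self (qFactorial_ne_zero hq n)]

lemma qBinom_self (hq : ∀ j : ℕ, 0 < j → q ^ j ≠ 1) (n : ℕ) : qBinom q n n = 1 := by
  simp [qBinom, qFactorial, div_self (qFactorial_ne_zero hq n)]

lemma qNat_add (hq1 : q ≠ 1) (a b : ℕ) : qNat q (a + b) = qNat q a + q ^ a * qNat q b := by
  have h : q - 1 ≠ 0 := sub_ne_zero.mpr hq1
  unfold qNat
  field_simp [qNat]
  ring

lemma qBinom_pascal (hq : ∀ j : ℕ, 0 < j → q ^ j ≠ 1) {n i : ℕ} (h : i < n) :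
    qBinom q (n + 1) (i + 1) = qBinom q n i + q ^ (i + 1) * qBinom q n (i + 1) := by
  have hF := qFactorial_ne_zero hq
  have key : qNat q (n + 1) = qNat q (i + 1) + q ^ (i + 1) * qNat q (n - i) := by
    rw [← qNat_add (q_ne_one hq)]; congr 1; omega
  have e2 : n - i = (n - (i + 1)) + 1 := by omega
  simp only [qBinom, Nat.succ_sub_succ]
  rw [show qFactorial q (n + 1) = qNat q (n + 1) * qFactorial q n from rfl,
      show qFactorial q (i + 1) = qNat q (i + 1) * qFactorial q i from rfl, key, e2,
      show qFactorial q ((n - (i + 1)) + 1) = qNat q ((n - (i + 1)) + 1) * qFactorial q (n - (i + 1)) from rfl]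
  have h1 : qNat q (i + 1) ≠ 0 := qNat_ne_zero hq (Nat.succ_pos i)
  have h2 : qNat q ((n - (i + 1)) + 1) ≠ 0 := qNat_ne_zero hq (Nat.succ_pos _)
  have h3 : qFactorial q i ≠ 0 := hF i
  have h4 : qFactorial q (n - (i + 1)) ≠ 0 := hF _
  field_simp

end Aux

open Finset in
lemma gauss_binom (c : ℂ) (hq : ∀ j : ℕ, 0 < j → (c ^ 2) ^ j ≠ 1) :
    ∀ (n : ℕ) (x : ℂ), ∏ t ∈ range n, (1 + (c ^ 2) ^ t * x)
      = ∑ i ∈ range (n + 1), c ^ (i * (i - 1)) * qBinom (c ^ 2) n i * x ^ i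
  | 0, x => by simp [qBinom_zero hq]
  | n + 1, x => by
    rw [Finset.prod_range_succ' (fun t => 1 + (c ^ 2) ^ t * x) n]
    have step : ∀ t ∈ range n, 1 + (c ^ 2) ^ (t + 1) * x = 1 + (c ^ 2) ^ t * (c ^ 2 * x) := by
      intro t _; ring
    rw [Finset.prod_congr rfl step, gauss_binom c hq n (c ^ 2 * x)]
    have hS1 : (∑ i ∈ range (n + 1), c ^ (i * (i - 1)) * qBinom (c ^ 2) n i * (c ^ 2 * x) ^ i)
        = ∑ i ∈ range (n + 1), c ^ (i * (i + 1)) * qBinom (c ^ 2) n i * x ^ i := by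
      refine Finset.sum_congr rfl fun i _ => ?_
      have he : i * (i - 1) + 2 * i = i * (i + 1) := by
        rcases i with _ | j
        · simp
        · simp only [Nat.succ_sub_one]; ring
      rw [mul_pow, ← pow_mul, show c ^ (i * (i - 1)) * qBinom (c ^ 2) n i * (c ^ (2 * i) * x ^ i)
            = c ^ (i * (i - 1) + 2 * i) * qBinom (c ^ 2) n i * x ^ i from by rw [pow_add]; ring, he]
    rw [hS1, pow_zero, one_mul]
    -- goal : S1 * (1 + x) = T
    rw [mul_one_add, Finset.sum_mul]
    have hS2 : (∑ i ∈ range (n + 1), c ^ (i * (i + 1)) * qBinom (c ^ 2) n i * x ^ i * x)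
        = (∑ i ∈ range n, c ^ (i * (i + 1)) * qBinom (c ^ 2) n i * x ^ (i + 1))
          + c ^ (n * (n + 1)) * x ^ (n + 1) := by
      rw [Finset.sum_range_succ, qBinom_self hq]
      congr 1
      · exact Finset.sum_congr rfl fun i _ => by rw [pow_succ]; ring
      · rw [pow_succ]; ring
    have hS1' : (∑ i ∈ range (n + 1), c ^ (i * (i + 1)) * qBinom (c ^ 2) n i * x ^ i)
        = 1 + ∑ i ∈ range n, c ^ ((i + 1) * (i + 2)) * qBinom (c ^ 2) n (i + 1) * x ^ (i + 1) := by
      rw [Finset.sum_range_succ' (fun i => c ^ (i * (i + 1)) * qBinom (c ^ 2) n i * x ^ i) n]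
      rw [qBinom_zero hq]
      simp only [pow_zero, mul_one, one_mul, Nat.zero_mul]
      rw [add_comm]
    have hT : (∑ i ∈ range (n + 2), c ^ (i * (i - 1)) * qBinom (c ^ 2) (n + 1) i * x ^ i)
        = 1 + ((∑ i ∈ range n, c ^ ((i + 1) * i) * qBinom (c ^ 2) (n + 1) (i + 1) * x ^ (i + 1))
          + c ^ ((n + 1) * n) * x ^ (n + 1)) := by
      rw [Finset.sum_range_succ' (fun i => c ^ (i * (i - 1)) * qBinom (c ^ 2) (n + 1) i * x ^ i) (n + 1)]
      rw [qBinom_zero hq]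
      simp only [pow_zero, mul_one, one_mul, Nat.zero_mul, Nat.succ_sub_one]
      rw [add_comm]
      congr 1
      rw [Finset.sum_range_succ, qBinom_self hq, mul_one]
    rw [hS2, hS1', hT, show (n + 1) * n = n * (n + 1) from by ring]
    have hAB : (∑ i ∈ range n, c ^ ((i + 1) * (i + 2)) * qBinom (c ^ 2) n (i + 1) * x ^ (i + 1))
        + (∑ i ∈ range n, c ^ (i * (i + 1)) * qBinom (c ^ 2) n i * x ^ (i + 1))
        = ∑ i ∈ range n, c ^ ((i + 1) * i) * qBinom (c ^ 2) (n + 1) (i + 1) * x ^ (i + 1) := by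
      rw [← Finset.sum_add_distrib]
      refine Finset.sum_congr rfl fun i hi => ?_
      have hi' : i < n := Finset.mem_range.mp hi
      rw [qBinom_pascal hq hi',
          show c ^ ((i + 1) * i) * (qBinom (c ^ 2) n i + (c ^ 2) ^ (i + 1) * qBinom (c ^ 2) n (i + 1)) * x ^ (i + 1)
        = c ^ ((i + 1) * i) * qBinom (c ^ 2) n i * x ^ (i + 1)
          + c ^ ((i + 1) * i + 2 * (i + 1)) * qBinom (c ^ 2) n (i + 1) * x ^ (i + 1) from by
      rw [pow_add, ← pow_mul]; ring,
      show (i + 1) * i + 2 * (i + 1) = (i + 1) * (i + 2) from by ring,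
      show (i + 1) * i = i * (i + 1) from by ring]
      ring
    linear_combination hAB

open Finset in
lemma prod_zpow_sum {c : ℂ} (hc : c ≠ 0) {β : Type*} (s : Finset β) (f : β → ℤ) :
    ∏ i ∈ s, c ^ f i = c ^ (∑ i ∈ s, f i) := by
  classical
  induction s using Finset.induction with
  | empty => simp
  | insert _ _ h ih => rw [Finset.prod_insert h, Finset.sum_insert h, zpow_add₀ hc, ih]

open Finset in
lemma core_prod (c : ℂ) (hc : c ≠ 0) (hq : ∀ j : ℕ, 0 < j → (c ^ 2) ^ j ≠ 1) (n : ℕ) (α : ℂ) :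
    ∏ t ∈ range n, (α + c ^ (2 * (t : ℤ) + 1 - n))
      = ∑ i ∈ range (n + 1), c ^ ((i : ℤ) * (i - n)) * qBinom (c ^ 2) n i * α ^ i := by
  -- factor each term
  have hfac : ∀ t ∈ range n, α + c ^ (2 * (t : ℤ) + 1 - n)
      = c ^ (2 * (t : ℤ) + 1 - n) * (1 + c ^ ((n : ℤ) - 1 - 2 * t) * α) := by
    intro t _
    have h0 : c ^ (2 * (t : ℤ) + 1 - n) * (c ^ ((n : ℤ) - 1 - 2 * t) * α) = α := by
      rw [← mul_assoc, ← zpow_add₀ hc,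
        show (2 * (t : ℤ) + 1 - n) + ((n : ℤ) - 1 - 2 * t) = 0 from by ring, zpow_zero, one_mul]
    rw [mul_one_add, h0]
    exact add_comm _ _
  rw [Finset.prod_congr rfl hfac, Finset.prod_mul_distrib, prod_zpow_sum hc]
  have hsum : (∑ t ∈ range n, (2 * (t : ℤ) + 1 - n)) = 0 := by
    set S := ∑ t ∈ range n, (2 * (t : ℤ) + 1 - n) with hS
    have hrefl := Finset.sum_range_reflect (fun t : ℕ => 2 * (t : ℤ) + 1 - n) n
    have hSS : S + S = 0 := by
      nth_rewrite 1 [hS, ← hrefl, ← Finset.sum_add_distrib]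
      refine Finset.sum_eq_zero fun j hj => ?_
      have hjn : j < n := Finset.mem_range.mp hj
      have hcast : ((n - 1 - j : ℕ) : ℤ) = (n : ℤ) - 1 - j := by omega
      simp only [hcast]; ring
    linarith
  rw [hsum, zpow_zero, one_mul]
  -- reflect
  have hrefl2 := Finset.prod_range_reflect (fun t : ℕ => 1 + c ^ ((n : ℤ) - 1 - 2 * t) * α) n
  rw [← hrefl2]
  have hfac2 : ∀ t ∈ range n, 1 + c ^ ((n : ℤ) - 1 - 2 * ((n - 1 - t : ℕ) : ℤ)) * α
      = 1 + (c ^ 2) ^ t * (c ^ ((1 : ℤ) - n) * α) := by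
    intro t ht
    have htn : t < n := Finset.mem_range.mp ht
    have hcast : ((n - 1 - t : ℕ) : ℤ) = (n : ℤ) - 1 - t := by omega
    rw [hcast]
    have : ((c ^ 2) ^ t : ℂ) * (c ^ ((1 : ℤ) - n) * α) = c ^ ((n : ℤ) - 1 - 2 * ((n : ℤ) - 1 - t)) * α := by
      rw [← pow_mul, ← zpow_natCast c (2 * t), ← mul_assoc, ← zpow_add₀ hc]
      congr 2
      push_cast
      ring
    rw [this]
  rw [Finset.prod_congr rfl hfac2, gauss_binom c hq n (c ^ ((1 : ℤ) - n) * α)]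
  refine Finset.sum_congr rfl fun i hi => ?_
  rw [mul_pow, ← zpow_natCast c (i * (i - 1)), ← zpow_natCast (c ^ ((1 : ℤ) - n)) i, ← zpow_mul]
  rw [show c ^ ((i * (i - 1) : ℕ) : ℤ) * qBinom (c ^ 2) n i * (c ^ (((1 : ℤ) - n) * i) * α ^ i)
      = c ^ ((i * (i - 1) : ℕ) : ℤ) * c ^ (((1 : ℤ) - n) * i) * qBinom (c ^ 2) n i * α ^ i from by
    ring, ← zpow_add₀ hc]
  congr 2
  rcases i with _ | j
  · simp
  · push_cast [Nat.succ_sub_one]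
    ring

open Finset in
lemma key_lemma (c : ℂ) (hc : c ≠ 0) (hq : ∀ j : ℕ, 0 < j → (c ^ 2) ^ j ≠ 1)
    (m0 k : ℕ) (α : ℂ) (hα : α ≠ 0) :
    c ^ ((m0 : ℤ) * (2 * k - 2 * m0 - 1)) *
      ∑ i ∈ range (2 * m0 + 1),
        c ^ ((i : ℤ) * (i - 2 * m0)) * qBinom (c ^ 2) (2 * m0) i * α ^ ((i : ℤ) - m0)
    = ∏ i ∈ Icc 1 m0,
        (c ^ (2 * (k : ℤ) - 2 * m0 - 1) * (α + α⁻¹) + c ^ (2 * ((k : ℤ) - i))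
          + c ^ (2 * ((k : ℤ) - 2 * m0 - 1 + i))) := by
  set E : ℤ := 2 * (k : ℤ) - 2 * m0 - 1 with hE
  -- Step A : factor each RHS term
  have hfac : ∀ i ∈ Icc 1 m0,
      c ^ E * (α + α⁻¹) + c ^ (2 * ((k : ℤ) - i)) + c ^ (2 * ((k : ℤ) - 2 * m0 - 1 + i))
      = c ^ E * ((α + c ^ (2 * (m0 : ℤ) + 1 - 2 * i)) * (1 + α⁻¹ * c ^ (2 * (i : ℤ) - 2 * m0 - 1))) := by
    intro i _
    have h1 : (2 * ((k : ℤ) - i)) = E + (2 * (m0 : ℤ) + 1 - 2 * i) := by rw [hE]; ring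
    have h2 : (2 * ((k : ℤ) - 2 * m0 - 1 + i)) = E + (2 * (i : ℤ) - 2 * m0 - 1) := by rw [hE]; ring
    have h3 : c ^ (2 * (m0 : ℤ) + 1 - 2 * i) * c ^ (2 * (i : ℤ) - 2 * m0 - 1) = 1 := by
      rw [← zpow_add₀ hc, show (2 * (m0 : ℤ) + 1 - 2 * i) + (2 * (i : ℤ) - 2 * m0 - 1) = 0 from by
        ring, zpow_zero]
    have hα1 : α * α⁻¹ = 1 := mul_inv_cancel₀ hα
    rw [h1, h2, zpow_add₀ hc, zpow_add₀ hc]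
    linear_combination (-(c ^ E * α⁻¹)) * h3 + (-(c ^ E * c ^ (2 * (i : ℤ) - 2 * m0 - 1))) * hα1
  rw [Finset.prod_congr rfl hfac, Finset.prod_mul_distrib, Finset.prod_mul_distrib,
    Finset.prod_const, Nat.card_Icc, Nat.add_sub_cancel]
  -- products over Icc as products over range
  have hIcc : (Icc 1 m0) = Finset.Ico 1 (m0 + 1) := by rw [Finset.Ico_add_one_right_eq_Icc]
  have hP1 : ∏ i ∈ Icc 1 m0, (α + c ^ (2 * (m0 : ℤ) + 1 - 2 * i))
      = ∏ t ∈ range m0, (α + c ^ (2 * (m0 + t : ℤ) + 1 - 2 * m0)) := by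
    rw [hIcc, Finset.prod_Ico_eq_prod_range]
    simp only [Nat.add_sub_cancel]
    rw [← Finset.prod_range_reflect]
    refine Finset.prod_congr rfl fun t ht => ?_
    have htm : t < m0 := Finset.mem_range.mp ht
    have : ((1 + (m0 - 1 - t) : ℕ) : ℤ) = (m0 : ℤ) - t := by omega
    rw [this]
    congr 1
    push_cast
    ring
  have hP2 : ∏ i ∈ Icc 1 m0, (α + c ^ (2 * (i : ℤ) - 2 * m0 - 1))
      = ∏ t ∈ range m0, (α + c ^ (2 * (t : ℤ) + 1 - 2 * m0)) := by
    rw [hIcc, Finset.prod_Ico_eq_prod_range]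
    simp only [Nat.add_sub_cancel]
    refine Finset.prod_congr rfl fun t _ => ?_
    congr 1
    push_cast
    ring
  have hmul : ∏ t ∈ range (2 * m0), (α + c ^ (2 * (t : ℤ) + 1 - (2 * m0 : ℕ)))
      = (∏ i ∈ Icc 1 m0, (α + c ^ (2 * (i : ℤ) - 2 * m0 - 1)))
        * ∏ i ∈ Icc 1 m0, (α + c ^ (2 * (m0 : ℤ) + 1 - 2 * i)) := by
    rw [hP1, hP2, show 2 * m0 = m0 + m0 from by ring, Finset.prod_range_add]
    congr 1
    · refine Finset.prod_congr rfl fun t _ => by push_cast; ring_nf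
    · refine Finset.prod_congr rfl fun t _ => by push_cast; ring_nf
  -- second product: pull out α
  have hsnd : ∏ i ∈ Icc 1 m0, (α + c ^ (2 * (i : ℤ) - 2 * m0 - 1))
      = α ^ m0 * ∏ i ∈ Icc 1 m0, (1 + α⁻¹ * c ^ (2 * (i : ℤ) - 2 * m0 - 1)) := by
    have : ∀ i ∈ Icc 1 m0, α + c ^ (2 * (i : ℤ) - 2 * m0 - 1)
        = α * (1 + α⁻¹ * c ^ (2 * (i : ℤ) - 2 * m0 - 1)) := by
      intro i _
      field_simp
    rw [Finset.prod_congr rfl this, Finset.prod_mul_distrib, Finset.prod_const, Nat.card_Icc,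
      Nat.add_sub_cancel]
  -- core identity
  have hcore := core_prod c hc hq (2 * m0) α
  rw [hmul, hsnd] at hcore
  push_cast at hcore
  -- now express LHS
  have hLHS : (∑ i ∈ range (2 * m0 + 1),
        c ^ ((i : ℤ) * (i - 2 * m0)) * qBinom (c ^ 2) (2 * m0) i * α ^ ((i : ℤ) - m0))
      = (α ^ m0)⁻¹ * ∑ i ∈ range (2 * m0 + 1),
          c ^ ((i : ℤ) * (i - 2 * m0)) * qBinom (c ^ 2) (2 * m0) i * α ^ i := by
    rw [Finset.mul_sum]
    refine Finset.sum_congr rfl fun i _ => ?_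
    rw [zpow_sub₀ hα, zpow_natCast, zpow_natCast, div_eq_mul_inv]
    ring
  have hαm : (α ^ m0 : ℂ) ≠ 0 := pow_ne_zero _ hα
  rw [hLHS, ← hcore, mul_assoc (α ^ m0), inv_mul_cancel_left₀ hαm,
    show ((c ^ E) ^ m0 : ℂ) = c ^ ((m0 : ℤ) * E) from by
      rw [← zpow_natCast (c ^ E) m0, ← zpow_mul, mul_comm]]
  ring


/-- The symmetric Laurent expression for the Hecke eigenvalue of an Ikeda lift equals
g_p(a) where a = p^{(2k-n-1)/2}(α + α⁻¹). -/
theorem laurent_eq_gp (p : ℕ) (hp : p.Prime) (k n : ℕ) (hk : Even k) (hn : Even n)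
    (hkpos : 0 < k) (hnpos : 0 < n) (hkn : k > n + 1) (α : ℂ) (hα : α ≠ 0) :
    ((((p : ℝ) ^ ((n * k : ℝ) / 2 - (n * (n + 1) : ℝ) / 4) : ℝ)) : ℂ) *
        ∑ i ∈ Finset.range (n + 1),
          (((p : ℝ) ^ ((i * ((i : ℝ) - (n : ℝ))) / 2) : ℝ) : ℂ) * qBinom (p : ℂ) n i *
            α ^ ((i : ℤ) - (n / 2 : ℕ)) =
      ∏ i ∈ Finset.Icc 1 (n / 2),
        ((((p : ℝ) ^ ((2 * (k : ℝ) - n - 1) / 2) : ℝ) : ℂ) * (α + α⁻¹) +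
          (((p : ℝ) ^ ((k : ℝ) - i) : ℝ) : ℂ) +
          (((p : ℝ) ^ ((k : ℝ) - (n : ℝ) - 1 + i) : ℝ) : ℂ)) := by
  obtain ⟨m0, rfl⟩ := hn
  have hp0 : (0 : ℝ) < p := by exact_mod_cast hp.pos
  set cR : ℝ := (p : ℝ) ^ ((1 : ℝ) / 2) with hcR
  have hcRpos : 0 < cR := Real.rpow_pos_of_pos hp0 _
  set c : ℂ := (cR : ℂ) with hcdef
  have hc : c ≠ 0 := by
    rw [hcdef]
    exact_mod_cast hcRpos.ne'
  have hc2 : c ^ 2 = (p : ℂ) := by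
    rw [hcdef, ← Complex.ofReal_pow]
    congr 1
    rw [hcR, ← Real.rpow_natCast ((p : ℝ) ^ ((1 : ℝ) / 2)) 2, ← Real.rpow_mul hp0.le]
    norm_num
  have hq : ∀ j : ℕ, 0 < j → (c ^ 2) ^ j ≠ 1 := by
    intro j hj hcon
    rw [hc2] at hcon
    have h1 : ((p ^ j : ℕ) : ℂ) = ((1 : ℕ) : ℂ) := by push_cast; simpa using hcon
    have h2 : p ^ j = 1 := Nat.cast_inj.mp h1
    have h3 : 2 ≤ p ^ j := le_trans hp.two_le (Nat.le_self_pow hj.ne' p)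
    omega
  have hconv : ∀ m : ℤ, (((p : ℝ) ^ ((m : ℝ) / 2) : ℝ) : ℂ) = c ^ m := by
    intro m
    rw [hcdef, ← Complex.ofReal_zpow]
    congr 1
    rw [hcR, ← Real.rpow_intCast ((p : ℝ) ^ ((1 : ℝ) / 2)) m, ← Real.rpow_mul hp0.le]
    congr 1
    push_cast
    ring
  have hd2 : (m0 + m0) / 2 = m0 := by omega
  rw [hd2]
  have hpre : ((((p : ℝ) ^ (((m0 + m0 : ℕ) * k : ℝ) / 2 - ((m0 + m0 : ℕ) * ((m0 + m0 : ℕ) + 1) : ℝ) / 4) : ℝ)) : ℂ)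
      = c ^ ((m0 : ℤ) * (2 * k - 2 * m0 - 1)) := by
    rw [show (((m0 + m0 : ℕ) * k : ℝ) / 2 - ((m0 + m0 : ℕ) * ((m0 + m0 : ℕ) + 1) : ℝ) / 4)
        = ((((m0 : ℤ) * (2 * k - 2 * m0 - 1)) : ℤ) : ℝ) / 2 from by push_cast; ring, hconv]
  have hsum : ∀ i ∈ Finset.range ((m0 + m0) + 1),
      (((p : ℝ) ^ ((i * ((i : ℝ) - ((m0 + m0 : ℕ) : ℝ))) / 2) : ℝ) : ℂ) * qBinom (p : ℂ) (m0 + m0) i *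
          α ^ ((i : ℤ) - (m0 : ℕ))
      = c ^ ((i : ℤ) * (i - 2 * m0)) * qBinom (c ^ 2) (2 * m0) i * α ^ ((i : ℤ) - m0) := by
    intro i _
    rw [show ((i * ((i : ℝ) - ((m0 + m0 : ℕ) : ℝ))) / 2) = ((((i : ℤ) * (i - 2 * m0)) : ℤ) : ℝ) / 2 from by
      push_cast; ring, hconv, hc2, show (2 : ℕ) * m0 = m0 + m0 from by ring]
  have hprod : ∀ i ∈ Finset.Icc 1 m0,
      ((((p : ℝ) ^ ((2 * (k : ℝ) - ((m0 + m0 : ℕ) : ℝ) - 1) / 2) : ℝ)) : ℂ) * (α + α⁻¹) +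
          (((p : ℝ) ^ ((k : ℝ) - i) : ℝ) : ℂ) +
          (((p : ℝ) ^ ((k : ℝ) - ((m0 + m0 : ℕ) : ℝ) - 1 + i) : ℝ) : ℂ)
      = c ^ (2 * (k : ℤ) - 2 * m0 - 1) * (α + α⁻¹) + c ^ (2 * ((k : ℤ) - i))
          + c ^ (2 * ((k : ℤ) - 2 * m0 - 1 + i)) := by
    intro i _
    rw [show ((2 * (k : ℝ) - ((m0 + m0 : ℕ) : ℝ) - 1) / 2) = (((2 * (k : ℤ) - 2 * m0 - 1) : ℤ) : ℝ) / 2 from by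
        push_cast; ring, hconv,
      show ((k : ℝ) - (i : ℝ)) = (((2 * ((k : ℤ) - i)) : ℤ) : ℝ) / 2 from by push_cast; ring, hconv,
      show ((k : ℝ) - ((m0 + m0 : ℕ) : ℝ) - 1 + i) = (((2 * ((k : ℤ) - 2 * m0 - 1 + i)) : ℤ) : ℝ) / 2 from by
        push_cast; ring, hconv]
  rw [hpre, Finset.sum_congr rfl hsum, Finset.prod_congr rfl hprod,
    show m0 + m0 + 1 = 2 * m0 + 1 from by ring]
  exact key_lemma c hc hq m0 k α hα
end

section
/- Let p > 1 be real and k, n even positive integers with k > n+1. For every real a with |a| ≤ 2 p^{(2k-n-1)/2}, p^{nk/2 - n(n+1)/4 + n²/8} ∏_{i=1}^{n/2} (1 - p^{-(i - 1/2)})² ≤ ∏_{i=1}^{n/2} (a + p^{k-i} + p^{k-n-1+i}) ≤ p^{nk/2 - n(n+1)/4 + n²/8} ∏_{i=1}^{n/2} (1 + p^{-(i - 1/2)})². -/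
/-!
Write the `i`-th factor as `a + x + y` with `x = p^(k-i)`, `y = p^(k-n-1+i)`. Then
`√(xy) = p^((2k-n-1)/2)`, so the Deligne bound `|a| ≤ 2√(xy)` squeezes the factor between
`(√x - √y)² = x (1 - p^t)²` and `(√x + √y)² = x (1 + p^t)²`, where `t = (2i-n-1)/2`.
Multiplying over `i`, the powers `x` contribute `p^(nk/2 - n(n+1)/4 + n²/8)`, and the
reflection `i ↦ n/2 + 1 - i` turns `t` into `-(i - 1/2)`.
-/

open Real Finset

theorem Finset.prod_Icc_one_reflect {M : Type*} [CommMonoid M] (f : ℕ → M) (m : ℕ) :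
    ∏ i ∈ Icc 1 m, f (m + 1 - i) = ∏ i ∈ Icc 1 m, f i := by
  rw [← Ico_add_one_right_eq_Icc, prod_Ico_reflect f 1 (Nat.le_succ _)]
  simp

theorem sum_Icc_natCast_sub (k m : ℕ) :
    ∑ i ∈ Icc 1 m, ((k : ℝ) - i) = m * k - m * (m + 1) / 2 := by
  induction m with
  | zero => simp
  | succ m ih =>
    rw [sum_Icc_succ_top (by omega), ih]
    push_cast
    ring

section

variable {p : ℝ}

theorem rpow_mul_one_sub_rpow_sq_le (hp : 0 < p) (u t : ℝ) {a : ℝ}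
    (ha : -(2 * p ^ (u + t)) ≤ a) :
    p ^ u * (1 - p ^ t) ^ 2 ≤ a + p ^ u + p ^ (u + 2 * t) := by
  rw [two_mul, rpow_add hp, rpow_add hp]
  rw [rpow_add hp] at ha
  nlinarith

theorem add_add_rpow_le_rpow_mul_one_add_rpow_sq (hp : 0 < p) (u t : ℝ) {a : ℝ}
    (ha : a ≤ 2 * p ^ (u + t)) :
    a + p ^ u + p ^ (u + 2 * t) ≤ p ^ u * (1 + p ^ t) ^ 2 := by
  rw [two_mul, rpow_add hp, rpow_add hp]
  rw [rpow_add hp] at ha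
  nlinarith

theorem add_rpow_add_rpow_mem_Icc_of_abs_le (hp : 0 < p) {a : ℝ} (k n i : ℝ)
    (ha : |a| ≤ 2 * p ^ ((2 * k - n - 1) / 2)) :
    a + p ^ (k - i) + p ^ (k - n - 1 + i) ∈ Set.Icc
      (p ^ (k - i) * (1 - p ^ ((2 * i - n - 1) / 2)) ^ 2)
      (p ^ (k - i) * (1 + p ^ ((2 * i - n - 1) / 2)) ^ 2) := by
  have hy : k - n - 1 + i = (k - i) + 2 * ((2 * i - n - 1) / 2) := by ring
  have hxy : (2 * k - n - 1) / 2 = (k - i) + (2 * i - n - 1) / 2 := by ring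
  rw [hxy, abs_le] at ha
  rw [hy]
  exact ⟨rpow_mul_one_sub_rpow_sq_le hp _ _ ha.1,
    add_add_rpow_le_rpow_mul_one_add_rpow_sq hp _ _ ha.2⟩

theorem prod_Icc_rpow_natCast_sub_mul (hp : 0 < p) (g : ℝ → ℝ) (k m : ℕ) :
    ∏ i ∈ Icc 1 m, p ^ ((k : ℝ) - i) * g (p ^ ((2 * (i : ℝ) - 2 * m - 1) / 2)) =
      p ^ (m * k - m * (m + 1) / 2 : ℝ) * ∏ i ∈ Icc 1 m, g (p ^ (-((i : ℝ) - 1 / 2))) := by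
  rw [prod_mul_distrib, ← rpow_sum_of_pos hp, sum_Icc_natCast_sub,
    ← prod_Icc_one_reflect (fun i : ℕ => g (p ^ ((2 * (i : ℝ) - 2 * m - 1) / 2)))]
  congr 1
  refine prod_congr rfl fun i hi => ?_
  congr 2
  rw [Nat.cast_sub (by grind)]
  push_cast
  ring

end

theorem gp_bounds_general (p : ℝ) (hp : 1 < p) (k n : ℕ) (hn : Even n)
    (a : ℝ) (ha : |a| ≤ 2 * p ^ ((2 * (k : ℝ) - n - 1) / 2)) :
    p ^ ((n * k : ℝ) / 2 - (n * (n + 1) : ℝ) / 4 + (n : ℝ) ^ 2 / 8) *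
        ∏ i ∈ Finset.Icc 1 (n / 2), (1 - p ^ (-((i : ℝ) - 1 / 2))) ^ 2 ≤
      ∏ i ∈ Finset.Icc 1 (n / 2),
        (a + p ^ ((k : ℝ) - i) + p ^ ((k : ℝ) - (n : ℝ) - 1 + i)) ∧
    ∏ i ∈ Finset.Icc 1 (n / 2),
        (a + p ^ ((k : ℝ) - i) + p ^ ((k : ℝ) - (n : ℝ) - 1 + i)) ≤
      p ^ ((n * k : ℝ) / 2 - (n * (n + 1) : ℝ) / 4 + (n : ℝ) ^ 2 / 8) *
        ∏ i ∈ Finset.Icc 1 (n / 2), (1 + p ^ (-((i : ℝ) - 1 / 2))) ^ 2 := by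
  have hp₀ : 0 < p := one_pos.trans hp
  obtain ⟨m, rfl⟩ := hn
  have hcast : ((m + m : ℕ) : ℝ) = 2 * m := by push_cast; ring
  have hexp : (2 * m : ℝ) * k / 2 - 2 * m * (2 * m + 1) / 4 + (2 * m : ℝ) ^ 2 / 8 =
      m * k - m * (m + 1) / 2 := by ring
  rw [show (m + m) / 2 = m by omega, hcast, hexp]
  rw [hcast] at ha
  have hfactor (i : ℕ) := add_rpow_add_rpow_mem_Icc_of_abs_le hp₀ k (2 * m) i ha
  constructor
  · exact (prod_Icc_rpow_natCast_sub_mul hp₀ (fun r => (1 - r) ^ 2) k m).symm.trans_le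
      (prod_le_prod (fun i _ => by positivity) fun i _ => (hfactor i).1)
  · exact (prod_le_prod (fun i _ => (by positivity : (0 : ℝ) ≤ _).trans (hfactor i).1)
      fun i _ => (hfactor i).2).trans_eq
        (prod_Icc_rpow_natCast_sub_mul hp₀ (fun r => (1 + r) ^ 2) k m)

/-- The main bounds for g_p(a) on the Deligne interval. -/
theorem gp_bounds (p : ℝ) (hp : 1 < p) (k n : ℕ) (hk : Even k) (hn : Even n)
    (hkpos : 0 < k) (hnpos : 0 < n) (hkn : k > n + 1)
    (a : ℝ) (ha : |a| ≤ 2 * p ^ ((2 * (k : ℝ) - n - 1) / 2)) :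
    p ^ ((n * k : ℝ) / 2 - (n * (n + 1) : ℝ) / 4 + (n : ℝ) ^ 2 / 8) *
        ∏ i ∈ Finset.Icc 1 (n / 2), (1 - p ^ (-((i : ℝ) - 1 / 2))) ^ 2 ≤
      ∏ i ∈ Finset.Icc 1 (n / 2),
        (a + p ^ ((k : ℝ) - i) + p ^ ((k : ℝ) - (n : ℝ) - 1 + i)) ∧
    ∏ i ∈ Finset.Icc 1 (n / 2),
        (a + p ^ ((k : ℝ) - i) + p ^ ((k : ℝ) - (n : ℝ) - 1 + i)) ≤
      p ^ ((n * k : ℝ) / 2 - (n * (n + 1) : ℝ) / 4 + (n : ℝ) ^ 2 / 8) *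
        ∏ i ∈ Finset.Icc 1 (n / 2), (1 + p ^ (-((i : ℝ) - 1 / 2))) ^ 2 :=
  gp_bounds_general p hp k n hn a ha
end
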